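/- Let X be a graph. Then the following are equivalent: (1) X has no bridges; (2) for every path γ in X, if the 1-chain c_γ is orthogonal to every 1-cycle in Z₁(X,ℝ), then c_γ = 0. -/

import Mathlib

/-- A graph in the sense of Sunada's topological crystallography: a set of vertices,
a set of edges, source and target maps, and a fixed-point free involution sending
each edge to its inverse. -/
structure SunadaGraph where
  V : Type
  E : Type
  s : E → V
  t : E → V
  inv : E → E
  s_inv : ∀ e, s (inv e) = t e
  t_inv : ∀ e, t (inv e) = s e
  inv_inv : ∀ e, inv (inv e) = e
  inv_ne : ∀ e, inv e ≠ e

namespace SunadaGraph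

variable (X : SunadaGraph)

/-- `X.IsPath x y γ` : the word of edges `γ` is a path from `x` to `y` in `X`. -/
inductive IsPath : X.V → X.V → List X.E → Prop
  | nil (x : X.V) : IsPath x x []
  | cons (e : X.E) {y : X.V} {γ : List X.E} (h : IsPath (X.t e) y γ) :
      IsPath (X.s e) y (e :: γ)

/-- A graph is connected if any two vertices are joined by a path. -/
def Connected : Prop := ∀ x y : X.V, ∃ γ : List X.E, X.IsPath x y γ

/-- An edge is a bridge if there is no path from its target to its source
avoiding both the edge and its inverse. -/
def IsBridge (e : X.E) : Prop :=
  ¬ ∃ γ : List X.E, X.IsPath (X.t e) (X.s e) γ ∧ e ∉ γ ∧ X.inv e ∉ γ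

/-- The space `C₁(X,ℝ)` of real 1-chains: formal linear combinations of edges
with `e⁻¹ = -e`, realized as finitely supported functions `c : E → ℝ` with
`c(e⁻¹) = - c(e)`. -/
noncomputable def C1 : Submodule ℝ (X.E →₀ ℝ) where
  carrier := {c | ∀ e, c (X.inv e) = - c e}
  add_mem' := by
    intro a b ha hb e
    simp only [Finsupp.add_apply, ha e, hb e]
    ring
  zero_mem' := by intro e; simp
  smul_mem' := by
    intro r c hc e
    simp only [Finsupp.smul_apply, hc e, smul_eq_mul]
    ring

/-- The 1-chain associated to a single edge. -/
noncomputable def edgeChain (e : X.E) : ↥X.C1 :=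
  ⟨Finsupp.single e 1 - Finsupp.single (X.inv e) 1, by
    intro f
    classical
    have h1 : (e = X.inv f) ↔ (X.inv e = f) := by
      constructor
      · rintro rfl; exact X.inv_inv f
      · rintro rfl; exact (X.inv_inv e).symm
    have h2 : (X.inv e = X.inv f) ↔ (e = f) := by
      constructor
      · intro h
        have := congrArg X.inv h
        rwa [X.inv_inv, X.inv_inv] at this
      · rintro rfl; rfl
    simp only [Finsupp.sub_apply, Finsupp.single_apply, h1, h2]
    ring⟩

/-- The 1-chain `c_γ` of a path `γ`. -/
noncomputable def pathChain (γ : List X.E) : ↥X.C1 := (γ.map X.edgeChain).sum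

/-- The inner product on `C₁(X,ℝ)` for which the edges form an orthonormal basis
(with `e⁻¹` counting as the negative of `e`). -/
noncomputable def chainInner (c d : ↥X.C1) : ℝ :=
  (1/2) * ((c : X.E →₀ ℝ).sum fun e x => x * (d : X.E →₀ ℝ) e)

/-- The boundary of a 1-chain. -/
noncomputable def boundary (c : ↥X.C1) : X.V →₀ ℝ :=
  (c : X.E →₀ ℝ).sum fun e x => x • (Finsupp.single (X.t e) (1:ℝ) - Finsupp.single (X.s e) 1)

/-- A 1-cycle is a 1-chain with vanishing boundary. -/
def IsCycle (c : ↥X.C1) : Prop := X.boundary c = 0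

/-- An integral 1-chain: all coefficients are integers. -/
def IsIntegral (c : ↥X.C1) : Prop := ∀ e, ∃ n : ℤ, (c : X.E →₀ ℝ) e = (n : ℝ)

/-- The support of a 1-chain: the set of edges with positive coefficient. -/
def chainSupp (c : ↥X.C1) : Set X.E := {e | 0 < (c : X.E →₀ ℝ) e}

/-- `p` is the orthogonal projection of `C₁(X,ℝ)` onto the space `Z₁(X,ℝ)` of 1-cycles:
it takes values in `Z₁(X,ℝ)` and `c - p c` is orthogonal to every 1-cycle. -/
def IsOrthoProj (p : ↥X.C1 → ↥X.C1) : Prop :=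
  (∀ c, X.IsCycle (p c)) ∧ (∀ c z, X.IsCycle z → X.chainInner (c - p c) z = 0)

/-- Two paths from `x` to `y` are homologous if one can be obtained from the other
by repeatedly inserting or deleting subwords `e e⁻¹`, and/or replacing a subword
`στ` by `τσ` where `σ` and `τ` are loops based at the same vertex. -/
inductive Homologous : X.V → X.V → List X.E → List X.E → Prop
  | refl {x y : X.V} (γ : List X.E) (h : X.IsPath x y γ) : Homologous x y γ γ
  | cancel {x y : X.V} (γ δ : List X.E) (e : X.E)
      (h : X.IsPath x y (γ ++ e :: X.inv e :: δ)) (h' : X.IsPath x y (γ ++ δ)) :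
      Homologous x y (γ ++ e :: X.inv e :: δ) (γ ++ δ)
  | swap {x y : X.V} (γ σ τ δ : List X.E) (v : X.V)
      (hσ : X.IsPath v v σ) (hτ : X.IsPath v v τ)
      (h : X.IsPath x y (γ ++ (σ ++ (τ ++ δ))))
      (h' : X.IsPath x y (γ ++ (τ ++ (σ ++ δ)))) :
      Homologous x y (γ ++ (σ ++ (τ ++ δ))) (γ ++ (τ ++ (σ ++ δ)))
  | symm {x y : X.V} {a b : List X.E} (h : Homologous x y a b) : Homologous x y b a
  | trans {x y : X.V} {a b c : List X.E} (h1 : Homologous x y a b)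
      (h2 : Homologous x y b c) : Homologous x y a c

/-- A simple path: no vertex is visited twice. -/
def IsSimplePath (x y : X.V) (γ : List X.E) : Prop :=
  X.IsPath x y γ ∧ (x :: γ.map X.t).Nodup

/-- A simple loop based at `x`: a loop in which every vertex other than `x` occurs
at most once and `x` occurs only as the initial and final vertex. -/
def IsSimpleLoop (x : X.V) (γ : List X.E) : Prop :=
  X.IsPath x x γ ∧ (x :: (γ.map X.t).dropLast).Nodup

/-- A reduced word: no subword of the form `e e⁻¹`. -/
def Reduced (γ : List X.E) : Prop := γ.Chain' (fun a b => b ≠ X.inv a)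

/-- A spanning tree: a set of edges, closed under inversion, such that the spanning
subgraph it determines is connected and has no nonempty reduced loops. -/
def IsSpanningTree (S : Set X.E) : Prop :=
  (∀ e ∈ S, X.inv e ∈ S) ∧
  (∀ x y : X.V, ∃ γ : List X.E, X.IsPath x y γ ∧ ∀ e ∈ γ, e ∈ S) ∧
  (∀ (x : X.V) (γ : List X.E), X.IsPath x x γ → (∀ e ∈ γ, e ∈ S) → X.Reduced γ → γ = [])

/-- The quotient of a set of 1-chains by the translation action of the
integral 1-cycles. -/
def transQuot (S : Set ↥X.C1) : Type :=
  Quot (fun a b : S => ∃ z : ↥X.C1, X.IsCycle z ∧ X.IsIntegral z ∧ (b : ↥X.C1) = (a : ↥X.C1) + z)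

end SunadaGraph

/-!
If `e` is a bridge, the vertices reachable from `t e` without crossing `e` form a set whose
indicator has gradient exactly `c_e`. A cycle pairs to zero with every gradient, so every
cycle vanishes on `e`, and `c_e ≠ 0` is orthogonal to `Z₁`.

Conversely, let `γ : x → y` be a path with `c_γ ⊥ Z₁`. Then `c_γ` is the gradient of the
potential `φ v = ⟨c_γ, c_π⟩`, where `π` is any path from `x` to `v`. If `c_γ ≠ 0`, then
`φ y = ‖c_γ‖² > 0 = φ x`, so the cut `{φ > 0}` separates `x` from `y`. Pairing `c_γ` with the
gradient of the indicator of the cut gives `2`, and every term of this pairing is nonnegative.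
Since `c_γ` has integer coefficients, every edge crossing the cut contributes at least `1`.
An edge of `γ` entering the cut and its inverse already contribute `2`, so the return path
that exists because the edge is not a bridge cannot leave the cut, which is a contradiction.
-/

theorem Finsupp.sum_mul_le_linearCombination {α : Type*} (c : α →₀ ℝ) (w : α → ℝ)
    (hw : ∀ a, 0 ≤ c a * w a) (s : Finset α) :
    ∑ a ∈ s, c a * w a ≤ Finsupp.linearCombination ℝ w c := by
  classical
  rw [Finsupp.linearCombination_apply, Finsupp.sum]
  calc ∑ a ∈ s, c a * w a ≤ ∑ a ∈ s ∪ c.support, c a * w a :=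
        Finset.sum_le_sum_of_subset_of_nonneg Finset.subset_union_left (fun a _ _ => hw a)
    _ = ∑ a ∈ c.support, c a • w a := by
        refine (Finset.sum_subset Finset.subset_union_right fun a _ ha => ?_).symm
        simp [Finsupp.notMem_support_iff.mp ha]

namespace SunadaGraph

variable {X : SunadaGraph}

theorem IsPath.append {x y z : X.V} {γ δ : List X.E} (hγ : X.IsPath x y γ)
    (hδ : X.IsPath y z δ) : X.IsPath x z (γ ++ δ) := by
  induction hγ with
  | nil => exact hδ
  | cons e _ ih => exact .cons e (ih hδ)

theorem isPath_singleton (e : X.E) : X.IsPath (X.s e) (X.t e) [e] :=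
  .cons e (.nil _)

theorem IsPath.concat {x : X.V} {γ : List X.E} {e : X.E} (hγ : X.IsPath x (X.s e) γ) :
    X.IsPath x (X.t e) (γ ++ [e]) :=
  hγ.append (isPath_singleton e)

theorem IsPath.reverse {x y : X.V} {γ : List X.E} (hγ : X.IsPath x y γ) :
    X.IsPath y x (γ.map X.inv).reverse := by
  induction hγ with
  | nil => exact .nil _
  | cons e _ ih =>
    have he := isPath_singleton (X.inv e)
    rw [X.s_inv, X.t_inv] at he
    simpa using ih.append he

theorem IsPath.exists_mem_crossing (P : X.V → Prop) {x y : X.V} {γ : List X.E}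
    (hγ : X.IsPath x y γ) (hx : P x) (hy : ¬ P y) : ∃ e ∈ γ, P (X.s e) ∧ ¬ P (X.t e) := by
  induction hγ with
  | nil => exact absurd hx hy
  | cons e _ ih =>
    by_cases he : P (X.t e)
    · obtain ⟨f, hf, hfs, hft⟩ := ih he hy
      exact ⟨f, List.mem_cons_of_mem _ hf, hfs, hft⟩
    · exact ⟨e, List.mem_cons_self, hx, he⟩

variable (X) in
def Reachable (x y : X.V) : Prop := ∃ γ, X.IsPath x y γ

theorem Reachable.refl (x : X.V) : X.Reachable x x := ⟨[], .nil x⟩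

theorem Reachable.step {x : X.V} {e : X.E} (h : X.Reachable x (X.s e)) :
    X.Reachable x (X.t e) :=
  let ⟨_, hγ⟩ := h; ⟨_, hγ.concat⟩

theorem Reachable.step_inv {x : X.V} {e : X.E} (h : X.Reachable x (X.t e)) :
    X.Reachable x (X.s e) := by
  simpa [X.s_inv, X.t_inv] using Reachable.step (e := X.inv e) (by rwa [X.s_inv])

theorem IsPath.reachable_source {x y : X.V} {γ : List X.E} (hγ : X.IsPath x y γ) {e : X.E}
    (he : e ∈ γ) : X.Reachable x (X.s e) := by
  induction hγ with
  | nil => simp at he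
  | cons f _ ih =>
    rcases List.mem_cons.mp he with rfl | he
    · exact .refl _
    · obtain ⟨π, hπ⟩ := ih he
      exact ⟨f :: π, .cons f hπ⟩

open Finsupp

theorem coe_edgeChain (e : X.E) :
    (X.edgeChain e : X.E →₀ ℝ) = single e 1 - single (X.inv e) 1 := rfl

theorem edgeChain_apply_self (e : X.E) : (X.edgeChain e : X.E →₀ ℝ) e = 1 := by
  classical
  simp [coe_edgeChain, X.inv_ne e]

theorem edgeChain_apply_of_ne {e f : X.E} (h : f ≠ e) (h' : f ≠ X.inv e) :
    (X.edgeChain e : X.E →₀ ℝ) f = 0 := by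
  classical
  simp [coe_edgeChain, Ne.symm h, Ne.symm h']

@[simp] theorem pathChain_cons (e : X.E) (γ : List X.E) :
    X.pathChain (e :: γ) = X.edgeChain e + X.pathChain γ := by
  simp [pathChain]

@[simp] theorem pathChain_append (γ δ : List X.E) :
    X.pathChain (γ ++ δ) = X.pathChain γ + X.pathChain δ := by
  simp [pathChain]

theorem pathChain_singleton (e : X.E) : X.pathChain [e] = X.edgeChain e := by
  simp [pathChain]

theorem pathChain_apply [DecidableEq X.E] (γ : List X.E) (f : X.E) :
    (X.pathChain γ : X.E →₀ ℝ) f = γ.count f - γ.count (X.inv f) := by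
  induction γ with
  | nil => simp [pathChain]
  | cons e γ ih =>
    have : e = X.inv f ↔ X.inv e = f := by
      constructor <;> rintro rfl <;> simp [X.inv_inv]
    simp only [pathChain_cons, Submodule.coe_add, Finsupp.add_apply, ih, coe_edgeChain,
      Finsupp.sub_apply, single_apply, List.count_cons, beq_iff_eq, this]
    split_ifs <;> push_cast <;> ring

theorem one_le_abs_pathChain_apply {γ : List X.E} {f : X.E}
    (h : (X.pathChain γ : X.E →₀ ℝ) f ≠ 0) : 1 ≤ |(X.pathChain γ : X.E →₀ ℝ) f| := by
  classical
  rw [pathChain_apply] at h ⊢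
  exact_mod_cast Int.one_le_abs (z := (γ.count f : ℤ) - γ.count (X.inv f)) (by exact_mod_cast h)

theorem IsPath.pathChain_apply_eq_zero {x y : X.V} {γ : List X.E} (hγ : X.IsPath x y γ)
    {f : X.E} (hf : ¬ X.Reachable x (X.s f)) : (X.pathChain γ : X.E →₀ ℝ) f = 0 := by
  classical
  have h₁ : f ∉ γ := fun h => hf (hγ.reachable_source h)
  have h₂ : X.inv f ∉ γ := by
    intro h
    have ht := hγ.reachable_source h
    rw [X.s_inv] at ht
    exact hf ht.step_inv
  simp [pathChain_apply, List.count_eq_zero_of_not_mem h₁, List.count_eq_zero_of_not_mem h₂]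

theorem linearCombination_edgeChain (w : X.E → ℝ) (e : X.E) :
    linearCombination ℝ w (X.edgeChain e : X.E →₀ ℝ) = w e - w (X.inv e) := by
  simp [coe_edgeChain]

theorem chainInner_eq_linearCombination (c d : X.C1) :
    X.chainInner c d = 1 / 2 * linearCombination ℝ (d : X.E →₀ ℝ) (c : X.E →₀ ℝ) := rfl

theorem chainInner_edgeChain_left (c : X.C1) (e : X.E) :
    X.chainInner (X.edgeChain e) c = (c : X.E →₀ ℝ) e := by
  rw [chainInner_eq_linearCombination, linearCombination_edgeChain, c.2 e]
  ring

theorem chainInner_edgeChain_right (c : X.C1) (e : X.E) :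
    X.chainInner c (X.edgeChain e) = (c : X.E →₀ ℝ) e := by
  classical
  simp [chainInner, coe_edgeChain, single_apply, mul_sub, sum_sub, c.2 e]
  split_ifs <;> linarith

theorem chainInner_add_right (c d d' : X.C1) :
    X.chainInner c (d + d') = X.chainInner c d + X.chainInner c d' := by
  simp only [chainInner, Submodule.coe_add, Finsupp.add_apply, mul_add, sum_add]

theorem chainInner_pathChain_right (c : X.C1) (π : List X.E) :
    X.chainInner c (X.pathChain π) = (π.map (c : X.E →₀ ℝ)).sum := by
  induction π with
  | nil => simp [chainInner, pathChain]
  | cons e π ih => rw [pathChain_cons, chainInner_add_right, chainInner_edgeChain_right, ih]; simp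

theorem chainInner_pathChain_reverse (c : X.C1) (π : List X.E) :
    X.chainInner c (X.pathChain (π.map X.inv).reverse) = - X.chainInner c (X.pathChain π) := by
  have hinv : ∀ e, (c : X.E →₀ ℝ) (X.inv e) = -(c : X.E →₀ ℝ) e := c.2
  induction π with
  | nil => simp [chainInner, pathChain]
  | cons e π ih =>
    simp only [chainInner_pathChain_right] at ih ⊢
    simp only [List.map_cons, List.reverse_cons, List.map_append, List.sum_append, ih,
      List.sum_cons, hinv]
    simp

theorem chainInner_self_pos {c : X.C1} (hc : c ≠ 0) : 0 < X.chainInner c c := by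
  obtain ⟨e, he⟩ := support_nonempty_iff.mpr (fun h => hc (Subtype.ext h))
  refine mul_pos one_half_pos (Finset.sum_pos' (fun f _ => mul_self_nonneg _) ⟨e, he, ?_⟩)
  exact mul_self_pos.mpr (mem_support_iff.mp he)

variable (X) in
def grad (φ : X.V → ℝ) (e : X.E) : ℝ := φ (X.t e) - φ (X.s e)

theorem grad_inv (φ : X.V → ℝ) (e : X.E) : X.grad φ (X.inv e) = - X.grad φ e := by
  simp [grad, X.s_inv, X.t_inv]

theorem linearCombination_grad (φ : X.V → ℝ) (c : X.C1) :
    linearCombination ℝ (X.grad φ) (c : X.E →₀ ℝ) = linearCombination ℝ φ (X.boundary c) := by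
  change _ = linearCombination ℝ φ (linearCombination ℝ
    (fun e => single (X.t e) (1 : ℝ) - single (X.s e) 1) (c : X.E →₀ ℝ))
  rw [linearCombination_linearCombination]
  congr 1
  ext e
  simp [grad]

theorem IsCycle.linearCombination_grad {z : X.C1} (hz : X.IsCycle z) (φ : X.V → ℝ) :
    linearCombination ℝ (X.grad φ) (z : X.E →₀ ℝ) = 0 := by
  rw [SunadaGraph.linearCombination_grad, hz, map_zero]

theorem IsPath.linearCombination_grad {x y : X.V} {γ : List X.E} (hγ : X.IsPath x y γ)
    (φ : X.V → ℝ) :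
    linearCombination ℝ (X.grad φ) (X.pathChain γ : X.E →₀ ℝ) = 2 * (φ y - φ x) := by
  induction hγ with
  | nil => simp [pathChain]
  | cons e _ ih =>
    rw [pathChain_cons, Submodule.coe_add, map_add, ih, linearCombination_edgeChain, grad_inv]
    simp only [grad]
    ring

theorem IsPath.isCycle_pathChain {x : X.V} {γ : List X.E} (hγ : X.IsPath x x γ) :
    X.IsCycle (X.pathChain γ) := by
  classical
  ext v
  have h := hγ.linearCombination_grad (Pi.single v 1)
  rw [SunadaGraph.linearCombination_grad, linearCombination_single_index] at h
  simpa using h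

open Classical in
variable (X) in
noncomputable def potential (c : X.C1) (x v : X.V) : ℝ :=
  if h : X.Reachable x v then X.chainInner c (X.pathChain h.choose) else 0

theorem potential_eq_chainInner {c : X.C1} (hc : ∀ z, X.IsCycle z → X.chainInner c z = 0)
    {x v : X.V} {π : List X.E} (hπ : X.IsPath x v π) :
    X.potential c x v = X.chainInner c (X.pathChain π) := by
  have h : X.Reachable x v := ⟨π, hπ⟩
  have hloop := hc _ (hπ.append h.choose_spec.reverse).isCycle_pathChain
  rw [pathChain_append, chainInner_add_right, chainInner_pathChain_reverse] at hloop
  rw [potential, dif_pos h]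
  linarith

theorem IsPath.grad_potential {x y : X.V} {γ : List X.E} (hγ : X.IsPath x y γ)
    (hc : ∀ z, X.IsCycle z → X.chainInner (X.pathChain γ) z = 0) :
    X.grad (X.potential (X.pathChain γ) x) = (X.pathChain γ : X.E →₀ ℝ) := by
  ext f
  by_cases hf : X.Reachable x (X.s f)
  · obtain ⟨π, hπ⟩ := hf
    rw [grad, potential_eq_chainInner hc hπ.concat, potential_eq_chainInner hc hπ,
      chainInner_pathChain_right, chainInner_pathChain_right]
    simp
  · have ht : ¬ X.Reachable x (X.t f) := fun h => hf h.step_inv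
    simp [grad, potential, hf, ht, hγ.pathChain_apply_eq_zero hf]

theorem grad_mul_grad_indicator_nonneg (φ : X.V → ℝ) (e : X.E) :
    0 ≤ X.grad φ e * X.grad (fun v => if 0 < φ v then 1 else 0) e := by
  simp only [grad]
  split_ifs <;> nlinarith

theorem one_le_grad_mul_grad_indicator {φ : X.V → ℝ} {e : X.E} (he : 1 ≤ |X.grad φ e|)
    (hcross : ¬ (0 < φ (X.s e) ↔ 0 < φ (X.t e))) :
    1 ≤ X.grad φ e * X.grad (fun v => if 0 < φ v then 1 else 0) e := by
  simp only [grad] at he ⊢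
  rcases le_abs'.mp he with h | h <;> split_ifs <;> first | tauto | linarith

theorem IsBridge.apply_eq_zero_of_isCycle {e : X.E} (he : X.IsBridge e) {z : X.C1}
    (hz : X.IsCycle z) : (z : X.E →₀ ℝ) e = 0 := by
  classical
  let B : X.V → Prop := fun v => ∃ δ, X.IsPath (X.t e) v δ ∧ e ∉ δ ∧ X.inv e ∉ δ
  have hstep : ∀ f, f ≠ e → f ≠ X.inv e → B (X.s f) → B (X.t f) := by
    rintro f hfe hfe' ⟨δ, hδ, heδ, heδ'⟩
    exact ⟨δ ++ [f], hδ.concat, by simp [heδ, Ne.symm hfe], by simp [heδ', Ne.symm hfe']⟩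
  have hgrad : X.grad (fun v => if B v then 1 else 0) = (X.edgeChain e : X.E →₀ ℝ) := by
    have hte : B (X.t e) := ⟨[], .nil _, List.not_mem_nil, List.not_mem_nil⟩
    have hse : ¬ B (X.s e) := he
    ext f
    by_cases hfe : f = e
    · subst hfe
      simp [grad, hte, hse, edgeChain_apply_self]
    by_cases hfe' : f = X.inv e
    · subst hfe'
      rw [grad_inv, (X.edgeChain e).2 e]
      simp [grad, hte, hse, edgeChain_apply_self]
    have hinv_ne : X.inv f ≠ e := fun h => hfe' (by rw [← h, X.inv_inv])
    have hinv_ne' : X.inv f ≠ X.inv e := fun h => hfe (by simpa [X.inv_inv] using congrArg X.inv h)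
    have hiff : B (X.s f) ↔ B (X.t f) := by
      refine ⟨hstep f hfe hfe', fun h => ?_⟩
      simpa [X.s_inv, X.t_inv] using hstep (X.inv f) hinv_ne hinv_ne' (by rwa [X.s_inv])
    simp [grad, hiff, edgeChain_apply_of_ne hfe hfe']
  have h := hz.linearCombination_grad (fun v => if B v then 1 else 0)
  rw [hgrad, ← mul_eq_zero_iff_left (a := 1 / 2) (by norm_num), ← chainInner_eq_linearCombination,
    chainInner_edgeChain_right] at h
  exact h

theorem IsPath.pathChain_eq_zero_of_orthogonal (hX : ∀ e, ¬ X.IsBridge e) {x y : X.V}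
    {γ : List X.E} (hγ : X.IsPath x y γ)
    (hc : ∀ z, X.IsCycle z → X.chainInner (X.pathChain γ) z = 0) : X.pathChain γ = 0 := by
  classical
  by_contra hne
  set c : X.E →₀ ℝ := (X.pathChain γ : X.E →₀ ℝ)
  set φ := X.potential (X.pathChain γ) x
  set ι : X.V → ℝ := fun v => if 0 < φ v then 1 else 0
  have hgrad : X.grad φ = c := hγ.grad_potential hc
  have hx : φ x = 0 := by
    rw [show φ x = _ from potential_eq_chainInner hc (.nil x)]
    simp [chainInner, pathChain]
  have hy : 0 < φ y := by
    rw [show φ y = _ from potential_eq_chainInner hc hγ]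
    exact chainInner_self_pos hne
  have hcross : ∀ f, ¬ (0 < φ (X.s f) ↔ 0 < φ (X.t f)) → 1 ≤ c f * X.grad ι f := by
    intro f hf
    have hcf : c f ≠ 0 := by
      rw [← hgrad, grad, sub_ne_zero]
      exact fun h => hf (by rw [h])
    rw [← hgrad]
    exact one_le_grad_mul_grad_indicator (by rw [hgrad]; exact one_le_abs_pathChain_apply hcf) hf
  obtain ⟨f, -, hfs, hft⟩ :=
    hγ.exists_mem_crossing (fun v => ¬ 0 < φ v) (by simp [hx]) (not_not.mpr hy)
  obtain ⟨δ, hδ, hfδ, hfδ'⟩ := not_not.mp (hX f)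
  obtain ⟨g, hg, hgs, hgt⟩ := hδ.exists_mem_crossing (fun v => 0 < φ v) (not_not.mp hft) hfs
  have : (3 : ℝ) ≤ 2 := calc
    3 ≤ ∑ h ∈ {f, X.inv f, g}, c h * X.grad ι h := by
        have hgf : g ≠ f := fun h => hfδ (h ▸ hg)
        have hgf' : g ≠ X.inv f := fun h => hfδ' (h ▸ hg)
        rw [Finset.sum_insert (by simp [(X.inv_ne f).symm, hgf.symm]),
          Finset.sum_insert (by simp [hgf'.symm]), Finset.sum_singleton]
        linarith [hcross f (by tauto), hcross (X.inv f) (by rw [X.s_inv, X.t_inv]; tauto),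
          hcross g (by tauto)]
    _ ≤ linearCombination ℝ (X.grad ι) c :=
        sum_mul_le_linearCombination _ _ (fun h => hgrad ▸ grad_mul_grad_indicator_nonneg φ h) _
    _ = 2 := by simp [c, hγ.linearCombination_grad, ι, hx, hy]
  norm_num at this

end SunadaGraph

/-- Lemma: bridges and orthogonality.  A graph `X` has no bridges
if and only if every 1-chain `c_γ` of a path `γ` that is orthogonal to every 1-cycle
vanishes. -/
theorem no_bridges_iff_orthogonal_path_chain_vanishes (X : SunadaGraph) :
    (∀ e : X.E, ¬ X.IsBridge e) ↔
      (∀ (x y : X.V) (γ : List X.E), X.IsPath x y γ →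
        (∀ z : ↥X.C1, X.IsCycle z → X.chainInner (X.pathChain γ) z = 0) →
        X.pathChain γ = 0) := by
  refine ⟨fun hX x y γ hγ hc => hγ.pathChain_eq_zero_of_orthogonal hX hc, fun h e he => ?_⟩
  have hc : ∀ z, X.IsCycle z → X.chainInner (X.pathChain [e]) z = 0 := fun z hz => by
    rw [X.pathChain_singleton, X.chainInner_edgeChain_left, he.apply_eq_zero_of_isCycle hz]
  have h0 := congrArg (fun c : X.C1 => (c : X.E →₀ ℝ) e) (h _ _ _ (X.isPath_singleton e) hc)
  simp [X.pathChain_singleton, X.edgeChain_apply_self] at h0
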